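/- arXiv:math/9803042 — 2 statements merged into one kernel-verified Lean document; each statement's English description precedes it below -/
import Mathlib

section
/- Let G be a torsion group of nilpotency class at most 2 (every element of G has finite order). Then G is absolutely closed in N₂ if and only if for every prime p and every subgroup H of G whose underlying set is exactly {g ∈ G : g has order a power of p}, the group H is absolutely closed in N₂. -/
universe u

/-- A group is nilpotent of class at most 2 (lies in `N₂`) if its commutator
subgroup is contained in its center. -/
def IsNil2 (G : Type*) [Group G] : Prop :=
  commutator G ≤ Subgroup.center G

/-- The dominion of a subgroup `B` of `A` in the variety `N₂`: the set of `a ∈ A`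
such that any two homomorphisms from `A` to a nil-2 group agreeing on `B` agree at `a`. -/
def Dominion {A : Type u} [Group A] (B : Subgroup A) : Set A :=
  {a | ∀ (C : Type u) [Group C], IsNil2 C →
    ∀ f g : A →* C, (∀ b ∈ B, f b = g b) → f a = g a}

/-- A group `B` is absolutely closed in `N₂` if for every nil-2 group `A`
containing (a copy of) `B` as a subgroup, the dominion of `B` in `A` is `B`. -/
def IsAbsolutelyClosed (B : Type u) [Group B] : Prop :=
  ∀ (A : Type u) [Group A], IsNil2 A →
    ∀ ι : B →* A, Function.Injective ι →
      Dominion ι.range = (ι.range : Set A)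
open scoped commutatorElement
open scoped IsMulCommutative
section Nil2Basic

variable {G : Type*} [Group G]

lemma comm_mem_center (hG : IsNil2 G) (x y : G) : ⁅x, y⁆ ∈ Subgroup.center G :=
  hG (Subgroup.commutator_mem_commutator (Subgroup.mem_top x) (Subgroup.mem_top y))

/-- `w * c = c * w` for `c` central -/
lemma central_comm {c : G} (h : c ∈ Subgroup.center G) (w : G) : w * c = c * w :=
  Subgroup.mem_center_iff.1 h w

lemma central_pow {c : G} (h : c ∈ Subgroup.center G) (m : ℕ) : c ^ m ∈ Subgroup.center G :=
  pow_mem h m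

lemma comm_mul_left (hG : IsNil2 G) (x y z : G) : ⁅x * y, z⁆ = ⁅x, z⁆ * ⁅y, z⁆ := by
  have h1 : y * z * y⁻¹ = ⁅y, z⁆ * z := by group
  have h2 : x * ⁅y, z⁆ = ⁅y, z⁆ * x := central_comm (comm_mem_center hG y z) x
  calc ⁅x * y, z⁆ = x * (y * z * y⁻¹) * x⁻¹ * z⁻¹ := by group
    _ = x * (⁅y, z⁆ * z) * x⁻¹ * z⁻¹ := by rw [h1]
    _ = (x * ⁅y, z⁆) * (z * x⁻¹ * z⁻¹) := by group
    _ = (⁅y, z⁆ * x) * (z * x⁻¹ * z⁻¹) := by rw [h2]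
    _ = ⁅y, z⁆ * ⁅x, z⁆ := by group
    _ = ⁅x, z⁆ * ⁅y, z⁆ := central_comm (comm_mem_center hG x z) _

lemma comm_mul_right (hG : IsNil2 G) (x y z : G) : ⁅x, y * z⁆ = ⁅x, y⁆ * ⁅x, z⁆ := by
  have : ⁅x, y * z⁆ = ⁅y * z, x⁆⁻¹ := by rw [commutatorElement_inv]
  rw [this, comm_mul_left hG, mul_inv_rev, commutatorElement_inv, commutatorElement_inv]
  exact central_comm (comm_mem_center hG x y) _

lemma comm_inv_left (hG : IsNil2 G) (x y : G) : ⁅x⁻¹, y⁆ = ⁅x, y⁆⁻¹ := by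
  have h : ⁅x * x⁻¹, y⁆ = ⁅x, y⁆ * ⁅x⁻¹, y⁆ := comm_mul_left hG x x⁻¹ y
  rw [mul_inv_cancel] at h
  simp only [commutatorElement_one_left] at h
  rw [eq_comm, inv_eq_iff_mul_eq_one, ← h]

lemma comm_inv_right (hG : IsNil2 G) (x y : G) : ⁅x, y⁻¹⁆ = ⁅x, y⁆⁻¹ := by
  have h : ⁅x, y * y⁻¹⁆ = ⁅x, y⁆ * ⁅x, y⁻¹⁆ := comm_mul_right hG x y y⁻¹
  rw [mul_inv_cancel] at h
  simp only [commutatorElement_one_right] at h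
  rw [eq_comm, inv_eq_iff_mul_eq_one, ← h]

lemma comm_pow_left (hG : IsNil2 G) (x y : G) (n : ℕ) : ⁅x ^ n, y⁆ = ⁅x, y⁆ ^ n := by
  induction n with
  | zero => simp
  | succ k ih => rw [pow_succ, comm_mul_left hG, ih, pow_succ]

lemma comm_pow_right (hG : IsNil2 G) (x y : G) (n : ℕ) : ⁅x, y ^ n⁆ = ⁅x, y⁆ ^ n := by
  induction n with
  | zero => simp
  | succ k ih => rw [pow_succ, comm_mul_right hG, ih, pow_succ]

lemma comm_eq_one_left {c : G} (y : G) (h : c ∈ Subgroup.center G) : ⁅c, y⁆ = 1 :=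
  commutatorElement_eq_one_iff_mul_comm.2 (central_comm h y).symm

lemma comm_eq_one_right {c : G} (x : G) (h : c ∈ Subgroup.center G) : ⁅x, c⁆ = 1 :=
  commutatorElement_eq_one_iff_mul_comm.2 (central_comm h x)

lemma comm_central_absorb_left (hG : IsNil2 G) (x y : G) {c : G} (h : c ∈ Subgroup.center G) :
    ⁅x * c, y⁆ = ⁅x, y⁆ := by
  rw [comm_mul_left hG, comm_eq_one_left y h, mul_one]

lemma comm_central_absorb_right (hG : IsNil2 G) (x y : G) {c : G} (h : c ∈ Subgroup.center G) :
    ⁅x, y * c⁆ = ⁅x, y⁆ := by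
  rw [comm_mul_right hG, comm_eq_one_right x h, mul_one]

lemma comm_conj_right (hG : IsNil2 G) (x w b : G) : ⁅x, w * b * w⁻¹⁆ = ⁅x, b⁆ := by
  have h1 : w * b * w⁻¹ = b * ⁅b⁻¹, w⁆ := by group
  rw [h1, comm_central_absorb_right hG x b (comm_mem_center hG b⁻¹ w)]

lemma mul_comm_swap (hG : IsNil2 G) (x y : G) : y * x = x * y * ⁅y, x⁆ := by
  have h : ⁅y, x⁆ * x * y = y * x := by group
  rw [← h, ← central_comm (comm_mem_center hG y x) x, mul_assoc,
    ← central_comm (comm_mem_center hG y x) y, mul_assoc]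

lemma pow_mul_comm_nil2 (hG : IsNil2 G) (x y : G) (m : ℕ) :
    y ^ m * x = x * y ^ m * ⁅y, x⁆ ^ m := by
  induction m with
  | zero => simp
  | succ j ihj =>
    have hc := comm_mem_center hG y x
    calc y ^ (j + 1) * x = y ^ j * (y * x) := by rw [pow_succ]; group
      _ = y ^ j * (x * y * ⁅y, x⁆) := by rw [mul_comm_swap hG x y]
      _ = (y ^ j * x) * y * ⁅y, x⁆ := by group
      _ = x * y ^ j * ⁅y, x⁆ ^ j * y * ⁅y, x⁆ := by rw [ihj]
      _ = x * y ^ j * (⁅y, x⁆ ^ j * y) * ⁅y, x⁆ := by group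
      _ = x * y ^ j * (y * ⁅y, x⁆ ^ j) * ⁅y, x⁆ := by
          rw [central_comm (central_pow hc j) y]
      _ = x * y ^ (j + 1) * ⁅y, x⁆ ^ (j + 1) := by rw [pow_succ, pow_succ]; group

/-- the key power identity in nil-2 groups -/
lemma mul_pow_nil2 (hG : IsNil2 G) (x y : G) (n : ℕ) :
    (x * y) ^ n = x ^ n * y ^ n * ⁅y, x⁆ ^ n.choose 2 := by
  induction n with
  | zero => simp
  | succ k ih =>
    have hc := comm_mem_center hG y x
    have hch : (k + 1).choose 2 = k.choose 2 + k := by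
      rw [Nat.choose_succ_succ, Nat.choose_one_right, Nat.add_comm]
    calc (x * y) ^ (k + 1) = (x * y) ^ k * (x * y) := by rw [pow_succ]
      _ = x ^ k * y ^ k * ⁅y, x⁆ ^ k.choose 2 * (x * y) := by rw [ih]
      _ = x ^ k * (y ^ k * (⁅y, x⁆ ^ k.choose 2 * x)) * y := by group
      _ = x ^ k * (y ^ k * (x * ⁅y, x⁆ ^ k.choose 2)) * y := by
          rw [central_comm (central_pow hc _) x]
      _ = x ^ k * (y ^ k * x) * (⁅y, x⁆ ^ k.choose 2 * y) := by group
      _ = x ^ k * (y ^ k * x) * (y * ⁅y, x⁆ ^ k.choose 2) := by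
          rw [central_comm (central_pow hc _) y]
      _ = x ^ k * (x * y ^ k * ⁅y, x⁆ ^ k) * (y * ⁅y, x⁆ ^ k.choose 2) := by
          rw [pow_mul_comm_nil2 hG x y k]
      _ = x ^ (k + 1) * y ^ k * (⁅y, x⁆ ^ k * y) * ⁅y, x⁆ ^ k.choose 2 := by
          rw [pow_succ]; group
      _ = x ^ (k + 1) * y ^ k * (y * ⁅y, x⁆ ^ k) * ⁅y, x⁆ ^ k.choose 2 := by
          rw [central_comm (central_pow hc _) y]
      _ = x ^ (k + 1) * y ^ (k + 1) * ⁅y, x⁆ ^ ((k + 1).choose 2) := by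
          rw [hch, pow_succ, pow_add]; group

end Nil2Basic
section Nil2Stability

variable {G : Type*} [Group G]

lemma isNil2_of_forall (h : ∀ x y z : G, z * ⁅x, y⁆ = ⁅x, y⁆ * z) : IsNil2 G := by
  rw [IsNil2, commutator_def, Subgroup.commutator_le]
  intro g₁ _ g₂ _
  exact Subgroup.mem_center_iff.2 fun z => h g₁ g₂ z

lemma isNil2_subgroup (hG : IsNil2 G) (H : Subgroup G) : IsNil2 ↥H := by
  apply isNil2_of_forall
  intro x y z
  ext
  push_cast [commutatorElement_def]
  simpa [commutatorElement_def] using central_comm (comm_mem_center hG (x : G) (y : G)) (z : G)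

lemma isNil2_prod {A B : Type*} [Group A] [Group B] (hA : IsNil2 A) (hB : IsNil2 B) :
    IsNil2 (A × B) := by
  apply isNil2_of_forall
  intro x y z
  have h1 : z.1 * ⁅x.1, y.1⁆ = ⁅x.1, y.1⁆ * z.1 := central_comm (comm_mem_center hA _ _) _
  have h2 : z.2 * ⁅x.2, y.2⁆ = ⁅x.2, y.2⁆ * z.2 := central_comm (comm_mem_center hB _ _) _
  have hcomm : ⁅x, y⁆ = (⁅x.1, y.1⁆, ⁅x.2, y.2⁆) := rfl
  rw [hcomm, Prod.ext_iff]
  exact ⟨h1, h2⟩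

lemma isNil2_of_surjective {H : Type*} [Group H] (f : G →* H) (hf : Function.Surjective f)
    (hG : IsNil2 G) : IsNil2 H := by
  apply isNil2_of_forall
  intro x y z
  obtain ⟨a, rfl⟩ := hf x
  obtain ⟨b, rfl⟩ := hf y
  obtain ⟨c, rfl⟩ := hf z
  rw [← map_commutatorElement, ← map_mul, ← map_mul]
  exact congrArg f (central_comm (comm_mem_center hG a b) c)

end Nil2Stability

section Torsion

variable {G : Type*} [Group G]

lemma orderOf_comm_dvd_left (hG : IsNil2 G) (x y : G) : orderOf ⁅x, y⁆ ∣ orderOf x := by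
  apply orderOf_dvd_of_pow_eq_one
  rw [← comm_pow_left hG, pow_orderOf_eq_one, commutatorElement_one_left]

lemma orderOf_comm_dvd_right (hG : IsNil2 G) (x y : G) : orderOf ⁅x, y⁆ ∣ orderOf y := by
  apply orderOf_dvd_of_pow_eq_one
  rw [← comm_pow_right hG, pow_orderOf_eq_one, commutatorElement_one_right]

lemma pElem_mul (hG : IsNil2 G) {p : ℕ} (hp : p.Prime) {x y : G}
    (hx : ∃ a, orderOf x = p ^ a) (hy : ∃ b, orderOf y = p ^ b) :
    ∃ c, orderOf (x * y) = p ^ c := by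
  obtain ⟨a, ha⟩ := hx
  obtain ⟨b, hb⟩ := hy
  set n := p ^ (a + b + 1) with hn
  have hxn : x ^ n = 1 := by
    apply orderOf_dvd_iff_pow_eq_one.1
    rw [ha]; exact pow_dvd_pow p (by omega)
  have hyn : y ^ n = 1 := by
    apply orderOf_dvd_iff_pow_eq_one.1
    rw [hb]; exact pow_dvd_pow p (by omega)
  have hcd : orderOf ⁅y, x⁆ ∣ p ^ b := hb ▸ orderOf_comm_dvd_left hG y x
  have hdvd : p ^ b ∣ n.choose 2 := by
    rw [Nat.choose_two_right]
    rcases hp.eq_two_or_odd' with h2 | hodd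
    · subst h2
      have : n * (n - 1) / 2 = 2 ^ (a + b) * (n - 1) := by
        rw [hn, pow_succ, mul_comm (2 ^ (a + b)) 2, mul_assoc, Nat.mul_div_cancel_left _ (by norm_num)]
      rw [this]
      exact Dvd.dvd.mul_right (pow_dvd_pow 2 (by omega)) _
    · have hnodd : Odd n := hodd.pow
      have h2 : 2 ∣ n - 1 := by
        rcases hnodd with ⟨t, ht⟩; omega
      rw [Nat.mul_div_assoc n h2]
      exact Dvd.dvd.mul_right (hn ▸ pow_dvd_pow p (by omega)) _
  have hcn : ⁅y, x⁆ ^ n.choose 2 = 1 :=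
    orderOf_dvd_iff_pow_eq_one.1 (hcd.trans hdvd)
  have hmuln : (x * y) ^ n = 1 := by
    rw [mul_pow_nil2 hG, hxn, hyn, hcn]; simp
  obtain ⟨k, _, hk⟩ := (Nat.dvd_prime_pow hp).1 (hn ▸ orderOf_dvd_of_pow_eq_one hmuln)
  exact ⟨k, hk⟩

lemma qElem_mul (hG : IsNil2 G) {p : ℕ} (hp : p.Prime) {x y : G}
    (hx : ¬ p ∣ orderOf x) (hy : ¬ p ∣ orderOf y) : ¬ p ∣ orderOf (x * y) := by
  set m := orderOf x
  set m' := orderOf y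
  set d := orderOf ⁅y, x⁆ with hd
  have hdm : d ∣ m' := orderOf_comm_dvd_left hG y x
  have hdp : ¬ p ∣ d := fun h => hy (h.trans hdm)
  rcases hp.eq_two_or_odd' with h2 | hodd
  · -- p = 2 : all of m, m', d odd; use E := m * m' * d
    subst h2
    set E := m * m' * d with hE
    have hxE : x ^ E = 1 := orderOf_dvd_iff_pow_eq_one.1 ⟨m' * d, by ring⟩
    have hyE : y ^ E = 1 := orderOf_dvd_iff_pow_eq_one.1 ⟨m * d, by ring⟩
    have hEodd : ¬ 2 ∣ E := by
      intro h
      rcases (Nat.Prime.dvd_mul Nat.prime_two).1 h with h' | h'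
      · rcases (Nat.Prime.dvd_mul Nat.prime_two).1 h' with h'' | h''
        · exact hx h''
        · exact hy h''
      · exact hdp h'
    have hcE : ⁅y, x⁆ ^ E.choose 2 = 1 := by
      apply orderOf_dvd_iff_pow_eq_one.1
      rw [Nat.choose_two_right, Nat.mul_div_assoc E (by omega : 2 ∣ E - 1)]
      exact Dvd.dvd.mul_right ⟨m * m', by ring⟩ _
    have : (x * y) ^ E = 1 := by rw [mul_pow_nil2 hG, hxE, hyE, hcE]; simp
    intro hcon
    exact hEodd (hcon.trans (orderOf_dvd_of_pow_eq_one this))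
  · -- p odd : use E := 2 * (m * m' * d)
    set E := 2 * (m * m' * d) with hE
    have hxE : x ^ E = 1 := orderOf_dvd_iff_pow_eq_one.1 ⟨2 * (m' * d), by ring⟩
    have hyE : y ^ E = 1 := orderOf_dvd_iff_pow_eq_one.1 ⟨2 * (m * d), by ring⟩
    have hcE : ⁅y, x⁆ ^ E.choose 2 = 1 := by
      apply orderOf_dvd_iff_pow_eq_one.1
      rw [Nat.choose_two_right, hE, mul_assoc, Nat.mul_div_cancel_left _ (by norm_num : 0 < 2)]
      exact Dvd.dvd.mul_right ⟨m * m', by ring⟩ _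
    have hmul : (x * y) ^ E = 1 := by rw [mul_pow_nil2 hG, hxE, hyE, hcE]; simp
    have hpE : ¬ p ∣ E := by
      intro h
      rcases (hp.dvd_mul).1 h with h' | h'
      · have h2 : p = 2 := (Nat.prime_dvd_prime_iff_eq hp Nat.prime_two).1 h'
        rw [h2] at hodd
        exact (by norm_num : ¬ Odd 2) hodd
      · rcases (hp.dvd_mul).1 h' with h'' | h''
        · rcases (hp.dvd_mul).1 h'' with h3 | h3
          · exact hx h3
          · exact hy h3
        · exact hdp h''
    intro hcon
    exact hpE (hcon.trans (orderOf_dvd_of_pow_eq_one hmul))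

end Torsion
section Parts

variable (G : Type*) [Group G]

def pSet (p : ℕ) : Set G := {g : G | ∃ k, orderOf g = p ^ k}
def qSet (p : ℕ) : Set G := {g : G | ¬ p ∣ orderOf g}

def pPart (p : ℕ) : Subgroup G := Subgroup.closure (pSet G p)
def qPart (p : ℕ) : Subgroup G := Subgroup.closure (qSet G p)

variable {G}

lemma pPart_carrier (hG : IsNil2 G) {p : ℕ} (hp : p.Prime) :
    ((pPart G p : Subgroup G) : Set G) = pSet G p := by
  apply Set.Subset.antisymm _ Subgroup.subset_closure
  intro x hx
  induction hx using Subgroup.closure_induction with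
  | mem x hx => exact hx
  | one => exact ⟨0, by simp⟩
  | mul x y _ _ hx hy => exact pElem_mul hG hp hx hy
  | inv x _ hx => obtain ⟨k, hk⟩ := hx; exact ⟨k, by rw [orderOf_inv, hk]⟩

lemma qPart_carrier (hG : IsNil2 G) {p : ℕ} (hp : p.Prime) :
    ((qPart G p : Subgroup G) : Set G) = qSet G p := by
  apply Set.Subset.antisymm _ Subgroup.subset_closure
  intro x hx
  induction hx using Subgroup.closure_induction with
  | mem x hx => exact hx
  | one =>
    intro hdvd
    rw [orderOf_one] at hdvd
    exact hp.ne_one (Nat.eq_one_of_dvd_one hdvd)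
  | mul x y _ _ hx hy => exact qElem_mul hG hp hx hy
  | inv x _ hx => simpa [qSet, orderOf_inv] using hx

lemma pq_commute (hG : IsNil2 G) {p : ℕ} (hp : p.Prime) {h k : G}
    (hh : h ∈ pSet G p) (hk : k ∈ qSet G p) : h * k = k * h := by
  obtain ⟨a, ha⟩ := hh
  have hc1 : orderOf ⁅h, k⁆ ∣ p ^ a := ha ▸ orderOf_comm_dvd_left hG h k
  have hc2 : orderOf ⁅h, k⁆ ∣ orderOf k := orderOf_comm_dvd_right hG h k
  have hco : Nat.Coprime (p ^ a) (orderOf k) :=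
    Nat.Coprime.pow_left a (hp.coprime_iff_not_dvd.2 hk)
  have h1 : orderOf ⁅h, k⁆ = 1 := Nat.eq_one_of_dvd_coprimes hco hc1 hc2
  exact commutatorElement_eq_one_iff_mul_comm.1 (orderOf_eq_one_iff.1 h1)

lemma pq_unique (hG : IsNil2 G) {p : ℕ} (hp : p.Prime) {e : G}
    (h1 : e ∈ pSet G p) (h2 : e ∈ qSet G p) : e = 1 := by
  obtain ⟨a, ha⟩ := h1
  rcases Nat.eq_zero_or_pos a with rfl | hapos
  · exact orderOf_eq_one_iff.1 (by simpa using ha)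
  · exact absurd (ha ▸ dvd_pow_self p hapos.ne') h2

lemma exists_pq_decomp (hG : IsNil2 G) {p : ℕ} (hp : p.Prime) (g : G) (hg : IsOfFinOrder g) :
    ∃ h k : G, h ∈ pSet G p ∧ k ∈ qSet G p ∧ g = h * k := by
  have hn : orderOf g ≠ 0 := (orderOf_pos_iff.2 hg).ne'
  set n := orderOf g with hndef
  set e := n.factorization p with hedef
  set m := n / p ^ e with hmdef
  have hnm : p ^ e * m = n := Nat.ordProj_mul_ordCompl_eq_self n p
  have hpm : ¬ p ∣ m := Nat.not_dvd_ordCompl hp hn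
  have hco : IsCoprime ((p ^ e : ℕ) : ℤ) ((m : ℕ) : ℤ) :=
    Nat.isCoprime_iff_coprime.2 (Nat.Coprime.pow_left e (hp.coprime_iff_not_dvd.2 hpm))
  obtain ⟨u, v, huv⟩ := hco
  refine ⟨g ^ (v * (m : ℤ)), g ^ (u * ((p ^ e : ℕ) : ℤ)), ?_, ?_, ?_⟩
  · have hpow : (g ^ (v * (m : ℤ))) ^ (p ^ e) = 1 := by
      rw [← zpow_natCast, ← zpow_mul]
      have : v * (m : ℤ) * ((p ^ e : ℕ) : ℤ) = ((n : ℕ) : ℤ) * v := by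
        push_cast [← hnm]; ring
      rw [this, zpow_mul, zpow_natCast, hndef, pow_orderOf_eq_one, one_zpow]
    obtain ⟨k, _, hk⟩ := (Nat.dvd_prime_pow hp).1 (orderOf_dvd_of_pow_eq_one hpow)
    exact ⟨k, hk⟩
  · have hpow : (g ^ (u * ((p ^ e : ℕ) : ℤ))) ^ m = 1 := by
      rw [← zpow_natCast, ← zpow_mul]
      have : u * ((p ^ e : ℕ) : ℤ) * (m : ℤ) = ((n : ℕ) : ℤ) * u := by
        push_cast [← hnm]; ring
      rw [this, zpow_mul, zpow_natCast, hndef, pow_orderOf_eq_one, one_zpow]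
    intro hdvd
    exact hpm (hdvd.trans (orderOf_dvd_of_pow_eq_one hpow))
  · rw [← zpow_add]
    have : v * (m : ℤ) + u * ((p ^ e : ℕ) : ℤ) = 1 := by rw [← huv]; ring
    rw [this, zpow_one]

lemma pq_decomp_unique (hG : IsNil2 G) {p : ℕ} (hp : p.Prime) {h k h' k' : G}
    (hh : h ∈ pSet G p) (hk : k ∈ qSet G p) (hh' : h' ∈ pSet G p) (hk' : k' ∈ qSet G p)
    (heq : h * k = h' * k') : h = h' ∧ k = k' := by
  have key : h'⁻¹ * h = k' * k⁻¹ := by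
    calc h'⁻¹ * h = h'⁻¹ * (h * k) * k⁻¹ := by group
      _ = h'⁻¹ * (h' * k') * k⁻¹ := by rw [heq]
      _ = k' * k⁻¹ := by group
  have hmem1 : h'⁻¹ * h ∈ pSet G p := by
    apply pElem_mul hG hp _ hh
    obtain ⟨a, ha⟩ := hh'
    exact ⟨a, by rw [orderOf_inv, ha]⟩
  have hmem2 : h'⁻¹ * h ∈ qSet G p := by
    rw [key]
    apply qElem_mul hG hp hk'
    simpa [qSet, orderOf_inv] using hk
  have h1 : h'⁻¹ * h = 1 := pq_unique hG hp hmem1 hmem2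
  have h2 : k' * k⁻¹ = 1 := by rw [← key]; exact h1
  exact ⟨(inv_mul_eq_one.1 h1).symm, (mul_inv_eq_one.1 h2).symm⟩

end Parts
section Forward

lemma range_subset_dominion {A : Type u} [Group A] (B : Subgroup A) :
    (B : Set A) ⊆ Dominion B := fun b hb C _ hC f g hfg => hfg b hb

variable {G : Type u} [Group G]

section ProjDefs

variable (hG : IsNil2 G) (htor : ∀ g : G, IsOfFinOrder g) {p : ℕ} (hp : p.Prime)
  (H : Subgroup G) (hH : (H : Set G) = pSet G p)

include hG htor hp hH

lemma memH_pSet (x : ↥H) : (x : G) ∈ pSet G p := by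
  have h : (x : G) ∈ (H : Set G) := x.2
  rwa [hH] at h

lemma memK_qSet (x : ↥(qPart G p)) : (x : G) ∈ qSet G p := by
  have h : (x : G) ∈ ((qPart G p : Subgroup G) : Set G) := x.2
  rwa [qPart_carrier hG hp] at h

lemma pq_exists_unique (g : G) :
    ∃! x : ↥H × ↥(qPart G p), g = (x.1 : G) * (x.2 : G) := by
  obtain ⟨h, k, hh, hk, hghk⟩ := exists_pq_decomp hG hp g (htor g)
  have hhH : h ∈ H := by rw [← SetLike.mem_coe, hH]; exact hh
  have hkK : k ∈ qPart G p := by rw [← SetLike.mem_coe, qPart_carrier hG hp]; exact hk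
  refine ⟨(⟨h, hhH⟩, ⟨k, hkK⟩), hghk, ?_⟩
  rintro ⟨h', k'⟩ hy
  have huniq := pq_decomp_unique hG hp (memH_pSet hG htor hp H hH h') (memK_qSet hG htor hp H hH k') hh hk
    (by rw [← hy, ← hghk])
  simp only [Prod.mk.injEq, Subtype.ext_iff]
  exact huniq

noncomputable def pPairF (g : G) : ↥H × ↥(qPart G p) :=
  (pq_exists_unique hG htor hp H hH g).exists.choose

lemma pPairF_spec (g : G) :
    g = ((pPairF hG htor hp H hH g).1 : G) * ((pPairF hG htor hp H hH g).2 : G) :=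
  (pq_exists_unique hG htor hp H hH g).exists.choose_spec

lemma pPairF_unique (g : G) (y : ↥H × ↥(qPart G p)) (hy : g = (y.1 : G) * (y.2 : G)) :
    y = pPairF hG htor hp H hH g :=
  (pq_exists_unique hG htor hp H hH g).unique hy (pPairF_spec hG htor hp H hH g)

lemma pPairF_mul (g₁ g₂ : G) :
    pPairF hG htor hp H hH (g₁ * g₂) = pPairF hG htor hp H hH g₁ * pPairF hG htor hp H hH g₂ := by
  set y₁ := pPairF hG htor hp H hH g₁
  set y₂ := pPairF hG htor hp H hH g₂
  refine (pPairF_unique hG htor hp H hH _ (y₁ * y₂) ?_).symm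
  have hc : ((y₂.1 : G)) * ((y₁.2 : G)) = ((y₁.2 : G)) * ((y₂.1 : G)) :=
    pq_commute hG hp (memH_pSet hG htor hp H hH y₂.1) (memK_qSet hG htor hp H hH y₁.2)
  have e1 := pPairF_spec hG htor hp H hH g₁
  have e2 := pPairF_spec hG htor hp H hH g₂
  calc g₁ * g₂ = ((y₁.1 : G) * (y₁.2 : G)) * ((y₂.1 : G) * (y₂.2 : G)) := by rw [← e1, ← e2]
    _ = (y₁.1 : G) * (((y₂.1 : G)) * ((y₁.2 : G))) * (y₂.2 : G) := by rw [hc]; group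
    _ = ((y₁.1 : G) * (y₂.1 : G)) * ((y₁.2 : G) * (y₂.2 : G)) := by group
    _ = (((y₁ * y₂).1 : G)) * (((y₁ * y₂).2 : G)) := by push_cast; rfl

noncomputable def phiH : G →* ↥H :=
  MonoidHom.mk' (fun g => (pPairF hG htor hp H hH g).1)
    (fun g₁ g₂ => by simp only [pPairF_mul]; rfl)

noncomputable def psiK : G →* ↥(qPart G p) :=
  MonoidHom.mk' (fun g => (pPairF hG htor hp H hH g).2)
    (fun g₁ g₂ => by simp only [pPairF_mul]; rfl)

lemma pPairF_on_H (x : ↥H) : pPairF hG htor hp H hH (x : G) = (x, 1) :=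
  (pPairF_unique hG htor hp H hH _ (x, 1) (by simp)).symm

lemma decomp_eq (g : G) : g = ((phiH hG htor hp H hH g : G)) * ((psiK hG htor hp H hH g : G)) :=
  pPairF_spec hG htor hp H hH g

end ProjDefs

lemma forward_direction (hG : IsNil2 G) (htor : ∀ g : G, IsOfFinOrder g)
    (hac : IsAbsolutelyClosed G) {p : ℕ} (hp : p.Prime)
    (H : Subgroup G) (hH : (H : Set G) = pSet G p) : IsAbsolutelyClosed ↥H := by
  intro A _ hA ι hι
  apply Set.Subset.antisymm _ (range_subset_dominion _)
  intro a ha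
  set φ := phiH hG htor hp H hH
  set ψ := psiK hG htor hp H hH
  set j : G →* A × ↥(qPart G p) := (ι.comp φ).prod ψ with hj
  have hjapp : ∀ g : G, j g = (ι (φ g), ψ g) := fun g => rfl
  have hjinj : Function.Injective j := by
    rw [injective_iff_map_eq_one]
    intro g hg
    rw [hjapp, Prod.ext_iff] at hg
    obtain ⟨hg1, hg2⟩ := hg
    have h1 : φ g = 1 := (injective_iff_map_eq_one ι).1 hι _ hg1
    have h2 : ψ g = 1 := hg2
    rw [decomp_eq hG htor hp H hH g]
    show ((φ g : G)) * ((ψ g : G)) = 1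
    rw [h1, h2]; simp
  have hnil : IsNil2 (A × ↥(qPart G p)) := isNil2_prod hA (isNil2_subgroup hG _)
  have hdom := hac (A × ↥(qPart G p)) hnil j hjinj
  have hmem : ((a, 1) : A × ↥(qPart G p)) ∈ Dominion j.range := by
    intro C _ hC f g hfg
    have hfg' : ∀ b ∈ ι.range,
        (f.comp (MonoidHom.inl A ↥(qPart G p))) b = (g.comp (MonoidHom.inl A ↥(qPart G p))) b := by
      rintro b ⟨x, rfl⟩
      have hx : j (x : G) = (ι x, 1) := by
        rw [hjapp]
        show (ι (pPairF hG htor hp H hH (x : G)).1, (pPairF hG htor hp H hH (x : G)).2) = _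
        rw [pPairF_on_H]
      have := hfg (j (x : G)) ⟨(x : G), rfl⟩
      rw [hx] at this
      exact this
    exact ha C hC _ _ hfg'
  rw [hdom] at hmem
  obtain ⟨g₀, hg₀⟩ := hmem
  refine ⟨φ g₀, ?_⟩
  have := congrArg Prod.fst hg₀
  rw [hjapp] at this
  exact this

end Forward
section Amalgam

open scoped TensorProduct

variable (A : Type u) [Group A]

/-- additive abelianization -/
abbrev AbG := Additive (Abelianization A)

def abm (x : A) : AbG A := Additive.ofMul (Abelianization.of x)

variable {A}

@[simp] lemma abm_mul (x y : A) : abm A (x * y) = abm A x + abm A y := by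
  simp [abm]

@[simp] lemma abm_one : abm A (1 : A) = 0 := by simp [abm]

@[simp] lemma abm_inv (x : A) : abm A x⁻¹ = - abm A x := by simp [abm]

@[simp] lemma abm_comm (x y : A) : abm A ⁅x, y⁆ = 0 := by
  have : Abelianization.of ⁅x, y⁆ = 1 := by
    rw [map_commutatorElement]
    exact commutatorElement_eq_one_iff_mul_comm.2 (mul_comm _ _)
  simp [abm, this]

@[simp] lemma abm_pow (x : A) (n : ℕ) : abm A (x ^ n) = n • abm A x := by
  simp [abm]

variable (A)

/-- the tensor square of the abelianization -/
abbrev TT := TensorProduct ℤ (AbG A) (AbG A)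

/-- underlying type of the nil-2 coproduct of `A` with itself -/
@[ext] structure Amalg : Type u where
  x : A
  y : A
  t : TT A

variable {A}

noncomputable instance : Mul (Amalg A) :=
  ⟨fun a b => ⟨a.x * b.x, a.y * b.y, a.t + b.t + (abm A a.y) ⊗ₜ[ℤ] (abm A b.x)⟩⟩

noncomputable instance : One (Amalg A) := ⟨⟨1, 1, 0⟩⟩

noncomputable instance : Inv (Amalg A) :=
  ⟨fun a => ⟨a.x⁻¹, a.y⁻¹, -a.t + (abm A a.y) ⊗ₜ[ℤ] (abm A a.x)⟩⟩

@[simp] lemma Amalg.mul_x (a b : Amalg A) : (a * b).x = a.x * b.x := rfl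
@[simp] lemma Amalg.mul_y (a b : Amalg A) : (a * b).y = a.y * b.y := rfl
@[simp] lemma Amalg.mul_t (a b : Amalg A) :
    (a * b).t = a.t + b.t + (abm A a.y) ⊗ₜ[ℤ] (abm A b.x) := rfl
@[simp] lemma Amalg.one_x : (1 : Amalg A).x = 1 := rfl
@[simp] lemma Amalg.one_y : (1 : Amalg A).y = 1 := rfl
@[simp] lemma Amalg.one_t : (1 : Amalg A).t = 0 := rfl
@[simp] lemma Amalg.inv_x (a : Amalg A) : (a⁻¹).x = a.x⁻¹ := rfl
@[simp] lemma Amalg.inv_y (a : Amalg A) : (a⁻¹).y = a.y⁻¹ := rfl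
@[simp] lemma Amalg.inv_t (a : Amalg A) :
    (a⁻¹).t = -a.t + (abm A a.y) ⊗ₜ[ℤ] (abm A a.x) := rfl

noncomputable instance : Group (Amalg A) where
  mul_assoc a b c := by
    ext
    · exact mul_assoc _ _ _
    · exact mul_assoc _ _ _
    · simp [TensorProduct.add_tmul, TensorProduct.tmul_add]
      abel
  one_mul a := by
    ext
    · exact one_mul _
    · exact one_mul _
    · simp
  mul_one a := by
    ext
    · exact mul_one _
    · exact mul_one _
    · simp
  inv_mul_cancel a := by
    ext
    · exact inv_mul_cancel _
    · exact inv_mul_cancel _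
    · simp [TensorProduct.neg_tmul]

/-- left and right embeddings -/
noncomputable def fL : A →* Amalg A :=
  MonoidHom.mk' (fun x => ⟨x, 1, 0⟩) (fun a b => by ext <;> simp)

noncomputable def fR : A →* Amalg A :=
  MonoidHom.mk' (fun x => ⟨1, x, 0⟩) (fun a b => by ext <;> simp)

@[simp] lemma fL_x (a : A) : (fL a).x = a := rfl
@[simp] lemma fL_y (a : A) : (fL a).y = 1 := rfl
@[simp] lemma fL_t (a : A) : (fL a).t = 0 := rfl
@[simp] lemma fR_x (a : A) : (fR a).x = 1 := rfl
@[simp] lemma fR_y (a : A) : (fR a).y = a := rfl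
@[simp] lemma fR_t (a : A) : (fR a).t = 0 := rfl

lemma Amalg.comm_formula (a b : Amalg A) :
    ⁅a, b⁆ = ⟨⁅a.x, b.x⁆, ⁅a.y, b.y⁆,
      (abm A a.y) ⊗ₜ[ℤ] (abm A b.x) - (abm A b.y) ⊗ₜ[ℤ] (abm A a.x)⟩ := by
  rw [commutatorElement_def]
  ext
  · simp [commutatorElement_def]
  · simp [commutatorElement_def]
  · simp [TensorProduct.add_tmul, TensorProduct.tmul_add, TensorProduct.neg_tmul,
      TensorProduct.tmul_neg]
    abel

lemma Amalg.mem_center (q : Amalg A)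
    (hx : q.x ∈ Subgroup.center A) (hy : q.y ∈ Subgroup.center A)
    (hx0 : abm A q.x = 0) (hy0 : abm A q.y = 0) : q ∈ Subgroup.center (Amalg A) := by
  rw [Subgroup.mem_center_iff]
  intro g
  ext
  · exact central_comm hx g.x
  · exact central_comm hy g.y
  · simp [hx0, hy0]
    abel

lemma Amalg.isNil2 (hA : IsNil2 A) : IsNil2 (Amalg A) := by
  apply isNil2_of_forall
  intro a b z
  have hc : ⁅a, b⁆ ∈ Subgroup.center (Amalg A) := by
    rw [Amalg.comm_formula]
    exact Amalg.mem_center _ (comm_mem_center hA _ _) (comm_mem_center hA _ _)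
      (by simp) (by simp)
  exact central_comm hc z

end Amalgam
section Lists

open scoped TensorProduct

variable {A : Type u} [Group A]

noncomputable def prodC (L : List (A × A)) : A := (L.map fun e => ⁅e.1, e.2⁆).prod
noncomputable def tsumL (L : List (A × A)) : TT A :=
  (L.map fun e => (abm A e.1) ⊗ₜ[ℤ] (abm A e.2)).sum
noncomputable def tsumR (L : List (A × A)) : TT A :=
  (L.map fun e => (abm A e.2) ⊗ₜ[ℤ] (abm A e.1)).sum
noncomputable def wsum (Lw : List (ℤ × A × A)) : TT A :=
  (Lw.map fun e => e.1 • ((abm A e.2.1) ⊗ₜ[ℤ] (abm A e.2.2))).sum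

@[simp] lemma prodC_nil : prodC ([] : List (A × A)) = 1 := rfl
@[simp] lemma prodC_cons (e : A × A) (L : List (A × A)) :
    prodC (e :: L) = ⁅e.1, e.2⁆ * prodC L := by simp [prodC]
@[simp] lemma prodC_append (L M : List (A × A)) :
    prodC (L ++ M) = prodC L * prodC M := by simp [prodC]
@[simp] lemma tsumL_nil : tsumL ([] : List (A × A)) = 0 := rfl
@[simp] lemma tsumL_cons (e : A × A) (L : List (A × A)) :
    tsumL (e :: L) = (abm A e.1) ⊗ₜ[ℤ] (abm A e.2) + tsumL L := by simp [tsumL]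
@[simp] lemma tsumL_append (L M : List (A × A)) :
    tsumL (L ++ M) = tsumL L + tsumL M := by simp [tsumL]
@[simp] lemma tsumR_nil : tsumR ([] : List (A × A)) = 0 := rfl
@[simp] lemma tsumR_cons (e : A × A) (L : List (A × A)) :
    tsumR (e :: L) = (abm A e.2) ⊗ₜ[ℤ] (abm A e.1) + tsumR L := by simp [tsumR]
@[simp] lemma tsumR_append (L M : List (A × A)) :
    tsumR (L ++ M) = tsumR L + tsumR M := by simp [tsumR]
@[simp] lemma wsum_nil : wsum ([] : List (ℤ × A × A)) = 0 := rfl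
@[simp] lemma wsum_cons (e : ℤ × A × A) (L : List (ℤ × A × A)) :
    wsum (e :: L) = e.1 • ((abm A e.2.1) ⊗ₜ[ℤ] (abm A e.2.2)) + wsum L := by simp [wsum]
@[simp] lemma wsum_append (L M : List (ℤ × A × A)) :
    wsum (L ++ M) = wsum L + wsum M := by simp [wsum]

lemma prodC_mem_center (hA : IsNil2 A) (L : List (A × A)) :
    prodC L ∈ Subgroup.center A := by
  apply Subgroup.list_prod_mem
  intro x hx
  rw [List.mem_map] at hx
  obtain ⟨e, _, rfl⟩ := hx
  exact comm_mem_center hA _ _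

@[simp] lemma abm_prodC (L : List (A × A)) : abm A (prodC L) = 0 := by
  induction L with
  | nil => simp
  | cons e L ih => simp [ih]

lemma prodC_invmap (hA : IsNil2 A) (L : List (A × A)) :
    prodC (L.map fun e => (e.1⁻¹, e.2)) = (prodC L)⁻¹ := by
  induction L with
  | nil => simp
  | cons e L ih =>
    simp only [List.map_cons, prodC_cons, ih, mul_inv_rev]
    rw [comm_inv_left hA]
    exact (central_comm (Subgroup.inv_mem _ (comm_mem_center hA e.1 e.2)) _).symm

lemma prodC_powmap (hA : IsNil2 A) (L : List (A × A)) (n : ℕ) :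
    prodC (L.map fun e => (e.1 ^ n, e.2)) = (prodC L) ^ n := by
  induction L with
  | nil => simp
  | cons e L ih =>
    simp only [List.map_cons, prodC_cons, ih]
    rw [comm_pow_left hA]
    exact ((Commute.mul_pow (by
      exact (central_comm (comm_mem_center hA e.1 e.2) (prodC L)).symm) n)).symm

lemma tsumL_invmap (L : List (A × A)) :
    tsumL (L.map fun e => (e.1⁻¹, e.2)) = - tsumL L := by
  induction L with
  | nil => simp
  | cons e L ih => simp [ih, TensorProduct.neg_tmul]; abel

lemma tsumL_powmap (L : List (A × A)) (n : ℕ) :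
    tsumL (L.map fun e => (e.1 ^ n, e.2)) = n • tsumL L := by
  induction L with
  | nil => simp
  | cons e L ih => simp [ih, TensorProduct.smul_tmul', smul_add]

lemma tsumR_powmap (L : List (A × A)) (n : ℕ) :
    tsumR (L.map fun e => (e.1 ^ n, e.2)) = n • tsumR L := by
  induction L with
  | nil => simp
  | cons e L ih => simp [ih, TensorProduct.tmul_smul, smul_add]

lemma wsum_powmap (Lw : List (ℤ × A × A)) (n : ℕ) :
    wsum (Lw.map fun e => (e.1, e.2.1, e.2.2 ^ n)) = n • wsum Lw := by
  induction Lw with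
  | nil => simp
  | cons e L ih =>
    simp only [List.map_cons, wsum_cons, ih, abm_pow, TensorProduct.tmul_smul, smul_add]
    rw [smul_comm]

lemma wsum_negmap (Lw : List (ℤ × A × A)) :
    wsum (Lw.map fun e => (-e.1, e.2.1, e.2.2)) = - wsum Lw := by
  induction Lw with
  | nil => simp
  | cons e L ih => simp [ih]; abel

end Lists
lemma tsumR_invmap {A : Type u} [Group A] (L : List (A × A)) :
    tsumR (L.map fun e => (e.1⁻¹, e.2)) = - tsumR L := by
  induction L with
  | nil => simp
  | cons e L ih => simp [ih, TensorProduct.tmul_neg]; abel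
section Necessity

open scoped TensorProduct

variable {A : Type u} [Group A]

def DomPred (B : Subgroup A) (q : Amalg A) : Prop :=
  ∃ (b : A) (L₁ L₂ : List (A × A)) (Lw : List (ℤ × A × A)),
    b ∈ B ∧ (∀ e ∈ L₁, e.1 ∈ B) ∧ (∀ e ∈ L₂, e.1 ∈ B) ∧
    (∀ e ∈ Lw, e.2.1 ∈ B ∧ e.2.2 ∈ B) ∧
    q.x = b * prodC L₁ ∧ q.y = b⁻¹ * prodC L₂ ∧
    q.t = - tsumL L₁ + tsumR L₂ + wsum Lw

noncomputable def DomSub (hA : IsNil2 A) (B : Subgroup A) : Subgroup (Amalg A) where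
  carrier := {q | DomPred B q}
  one_mem' := ⟨1, [], [], [], B.one_mem, by simp, by simp, by simp, by simp, by simp, by simp⟩
  mul_mem' := by
    rintro qa qb ⟨b, L₁, L₂, Lw, hb, h1, h2, hw, hx, hy, ht⟩
      ⟨b', M₁, M₂, Mw, hb', h1', h2', hw', hx', hy', ht'⟩
    refine ⟨b * b', L₁ ++ M₁, (b, b') :: (L₂ ++ M₂),
      (-1, b, b') :: (-1, b', b) :: (Lw ++ Mw), B.mul_mem hb hb', ?_, ?_, ?_, ?_, ?_, ?_⟩
    · intro e he; rcases List.mem_append.1 he with h | h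
      exacts [h1 e h, h1' e h]
    · intro e he
      rcases List.mem_cons.1 he with rfl | h
      · exact hb
      · rcases List.mem_append.1 h with h | h
        exacts [h2 e h, h2' e h]
    · intro e he
      rcases List.mem_cons.1 he with rfl | h
      · exact ⟨hb, hb'⟩
      rcases List.mem_cons.1 h with rfl | h
      · exact ⟨hb', hb⟩
      rcases List.mem_append.1 h with h | h
      exacts [hw e h, hw' e h]
    · show qa.x * qb.x = b * b' * prodC (L₁ ++ M₁)
      rw [hx, hx', prodC_append]
      have hc := central_comm (prodC_mem_center hA L₁) b'
      calc b * prodC L₁ * (b' * prodC M₁) = b * (prodC L₁ * b') * prodC M₁ := by group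
        _ = b * (b' * prodC L₁) * prodC M₁ := by rw [← hc]
        _ = b * b' * (prodC L₁ * prodC M₁) := by group
    · show qa.y * qb.y = (b * b')⁻¹ * prodC ((b, b') :: (L₂ ++ M₂))
      rw [hy, hy', prodC_cons, prodC_append]
      have hc := central_comm (prodC_mem_center hA L₂) b'⁻¹
      have key : b⁻¹ * b'⁻¹ = (b * b')⁻¹ * ⁅b, b'⁆ := by group
      calc b⁻¹ * prodC L₂ * (b'⁻¹ * prodC M₂)
          = b⁻¹ * (prodC L₂ * b'⁻¹) * prodC M₂ := by group
        _ = b⁻¹ * (b'⁻¹ * prodC L₂) * prodC M₂ := by rw [← hc]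
        _ = (b⁻¹ * b'⁻¹) * (prodC L₂ * prodC M₂) := by group
        _ = ((b * b')⁻¹ * ⁅b, b'⁆) * (prodC L₂ * prodC M₂) := by rw [← key]
        _ = (b * b')⁻¹ * (⁅(b, b').1, (b, b').2⁆ * (prodC L₂ * prodC M₂)) := by group
    · show qa.t + qb.t + (abm A qa.y) ⊗ₜ[ℤ] (abm A qb.x) = _
      rw [ht, ht', hy, hx']
      have e1 : abm A (b⁻¹ * prodC L₂) = - abm A b := by simp
      have e2 : abm A (b' * prodC M₁) = abm A b' := by simp
      rw [e1, e2]
      simp only [tsumL_append, tsumR_cons, tsumR_append, wsum_cons, wsum_append,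
        TensorProduct.neg_tmul, neg_smul, one_smul]
      abel
  inv_mem' := by
    rintro q ⟨b, L₁, L₂, Lw, hb, h1, h2, hw, hx, hy, ht⟩
    refine ⟨b⁻¹, L₁.map fun e => (e.1⁻¹, e.2), L₂.map fun e => (e.1⁻¹, e.2),
      (-1, b, b) :: Lw.map (fun e => (-e.1, e.2.1, e.2.2)), B.inv_mem hb, ?_, ?_, ?_, ?_, ?_, ?_⟩
    · intro e he; rw [List.mem_map] at he; obtain ⟨f, hf, rfl⟩ := he
      exact B.inv_mem (h1 f hf)
    · intro e he; rw [List.mem_map] at he; obtain ⟨f, hf, rfl⟩ := he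
      exact B.inv_mem (h2 f hf)
    · intro e he
      rcases List.mem_cons.1 he with rfl | h
      · exact ⟨hb, hb⟩
      rw [List.mem_map] at h; obtain ⟨f, hf, rfl⟩ := h
      exact hw f hf
    · show q.x⁻¹ = b⁻¹ * prodC _
      rw [hx, prodC_invmap hA, mul_inv_rev]
      exact (central_comm (Subgroup.inv_mem _ (prodC_mem_center hA L₁)) b⁻¹).symm
    · show q.y⁻¹ = (b⁻¹)⁻¹ * prodC _
      rw [hy, prodC_invmap hA, mul_inv_rev, inv_inv]
      exact (central_comm (Subgroup.inv_mem _ (prodC_mem_center hA L₂)) b).symm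
    · show -q.t + (abm A q.y) ⊗ₜ[ℤ] (abm A q.x) = _
      rw [ht, hx, hy]
      have e1 : abm A (b⁻¹ * prodC L₂) = - abm A b := by simp
      have e2 : abm A (b * prodC L₁) = abm A b := by simp
      rw [e1, e2, tsumL_invmap, tsumR_invmap, wsum_cons, wsum_negmap]
      simp only [neg_smul, one_smul, TensorProduct.neg_tmul]
      abel

lemma mem_DomSub {hA : IsNil2 A} {B : Subgroup A} {q : Amalg A} :
    q ∈ DomSub hA B ↔ DomPred B q := Iff.rfl

lemma DomSub_comm_mem (hA : IsNil2 A) (B : Subgroup A) (d g : Amalg A)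
    (hd : d ∈ DomSub hA B) : ⁅d, g⁆ ∈ DomSub hA B := by
  obtain ⟨b, L₁, L₂, Lw, hb, h1, h2, hw, hx, hy, ht⟩ := hd
  rw [Amalg.comm_formula]
  refine ⟨1, [(b, g.x)], [(b⁻¹, g.y)], [], B.one_mem, ?_, ?_, by simp, ?_, ?_, ?_⟩
  · intro e he; rw [List.mem_singleton] at he; subst he; exact hb
  · intro e he; rw [List.mem_singleton] at he; subst he; exact B.inv_mem hb
  · show ⁅d.x, g.x⁆ = 1 * prodC [(b, g.x)]
    rw [hx, one_mul, prodC_cons, prodC_nil, mul_one]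
    exact comm_central_absorb_left hA b g.x (prodC_mem_center hA L₁)
  · show ⁅d.y, g.y⁆ = 1⁻¹ * prodC [(b⁻¹, g.y)]
    rw [hy, inv_one, one_mul, prodC_cons, prodC_nil, mul_one]
    exact comm_central_absorb_left hA b⁻¹ g.y (prodC_mem_center hA L₂)
  · show (abm A d.y) ⊗ₜ[ℤ] (abm A g.x) - (abm A g.y) ⊗ₜ[ℤ] (abm A d.x) = _
    rw [hx, hy]
    have e1 : abm A (b⁻¹ * prodC L₂) = - abm A b := by simp
    have e2 : abm A (b * prodC L₁) = abm A b := by simp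
    rw [e1, e2]
    simp only [tsumL_cons, tsumL_nil, tsumR_cons, tsumR_nil, wsum_nil, abm_inv,
      TensorProduct.neg_tmul, TensorProduct.tmul_neg]
    abel

lemma DomSub_normal (hA : IsNil2 A) (B : Subgroup A) : (DomSub hA B).Normal := by
  constructor
  intro n hn g
  have key : g * n * g⁻¹ = n * ⁅n⁻¹, g⁆ := by group
  rw [key]
  exact Subgroup.mul_mem _ hn (DomSub_comm_mem hA B n⁻¹ g (Subgroup.inv_mem _ hn))

lemma dominion_necessity (hA : IsNil2 A) (B : Subgroup A) {a : A} (ha : a ∈ Dominion B) :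
    ∃ (b : A) (L₁ L₂ : List (A × A)) (Lw : List (ℤ × A × A)),
      b ∈ B ∧ (∀ e ∈ L₁, e.1 ∈ B) ∧ (∀ e ∈ L₂, e.1 ∈ B) ∧
      (∀ e ∈ Lw, e.2.1 ∈ B ∧ e.2.2 ∈ B) ∧
      a = b⁻¹ * prodC L₂ ∧ (prodC L₂)⁻¹ = prodC L₁ ∧
      tsumL L₁ = tsumR L₂ + wsum Lw := by
  classical
  set S : Set (Amalg A) := {q | ∃ b ∈ B, q = ⟨b, b⁻¹, 0⟩} with hS
  set N := Subgroup.normalClosure S with hN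
  haveI : N.Normal := Subgroup.normalClosure_normal
  have hCnil : IsNil2 (Amalg A ⧸ N) := isNil2_of_surjective (QuotientGroup.mk' N)
    (QuotientGroup.mk'_surjective N) (Amalg.isNil2 hA)
  set f : A →* Amalg A ⧸ N := (QuotientGroup.mk' N).comp fL with hf
  set g : A →* Amalg A ⧸ N := (QuotientGroup.mk' N).comp fR with hg
  have hagree : ∀ b ∈ B, f b = g b := by
    intro b hb
    show ((fL b : Amalg A) : Amalg A ⧸ N) = ((fR b : Amalg A) : Amalg A ⧸ N)
    rw [QuotientGroup.eq]
    apply Subgroup.subset_normalClosure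
    show (fL b)⁻¹ * fR b ∈ S
    refine ⟨b⁻¹, B.inv_mem hb, ?_⟩
    ext <;> simp
  have heq := ha (Amalg A ⧸ N) hCnil f g hagree
  have hmem : (⟨a⁻¹, a, 0⟩ : Amalg A) ∈ N := by
    have h' : (fL a)⁻¹ * fR a ∈ N := (QuotientGroup.eq).1 heq
    have he : (fL a)⁻¹ * fR a = (⟨a⁻¹, a, 0⟩ : Amalg A) := by ext <;> simp
    rwa [he] at h'
  have hDom : (⟨a⁻¹, a, 0⟩ : Amalg A) ∈ DomSub hA B := by
    haveI := DomSub_normal hA B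
    refine Subgroup.normalClosure_le_normal ?_ hmem
    rintro q ⟨b, hb, rfl⟩
    exact ⟨b, [], [], [], hb, by simp, by simp, by simp, by simp, by simp, by simp⟩
  obtain ⟨b, L₁, L₂, Lw, hb, h1, h2, hw, hx, hy, ht⟩ := hDom
  have hx' : a⁻¹ = b * prodC L₁ := hx
  have hy' : a = b⁻¹ * prodC L₂ := hy
  have ht' : (0 : TT A) = - tsumL L₁ + tsumR L₂ + wsum Lw := ht
  refine ⟨b, L₁, L₂, Lw, hb, h1, h2, hw, hy', ?_, ?_⟩
  · have hP2 : prodC L₂ = b * a := by rw [hy']; group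
    have hcen := central_comm (prodC_mem_center hA L₁) b
    calc (prodC L₂)⁻¹ = a⁻¹ * b⁻¹ := by rw [hP2]; group
      _ = b * prodC L₁ * b⁻¹ := by rw [hx']
      _ = prodC L₁ * b * b⁻¹ := by rw [hcen]
      _ = prodC L₁ := by group
  · apply eq_of_sub_eq_zero
    have e : tsumL L₁ - (tsumR L₂ + wsum Lw) = -(- tsumL L₁ + tsumR L₂ + wsum Lw) := by abel
    rw [e, ← ht', neg_zero]

end Necessity
section Sufficiency

open scoped TensorProduct

variable {A : Type u} [Group A]
variable {C : Type*} [Group C] (hC : IsNil2 C) (f g : A →* C)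

/-- the deviation map -/
def dlt (y : A) : C := f y * (g y)⁻¹

lemma dlt_mul_g (y : A) : dlt f g y * g y = f y := by
  rw [dlt]; group

lemma dlt_eq_one {y : A} (h : f y = g y) : dlt f g y = 1 := by
  rw [dlt, h]; group

lemma dlt_mul (hC : IsNil2 C) (y y' : A) :
    dlt f g (y * y') = dlt f g y * (g y * dlt f g y' * (g y)⁻¹) := by
  simp only [dlt, map_mul]; group

/-- inner pairing: for fixed x, `y ↦ ⁅g x, δ y⁆` with values in the center -/
noncomputable def mapInner (x : A) : A →* ↥(Subgroup.center C) :=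
  MonoidHom.mk' (fun y => ⟨⁅g x, dlt f g y⁆, comm_mem_center hC _ _⟩)
    (fun y y' => by
      refine Subtype.ext ?_
      show ⁅g x, dlt f g (y * y')⁆ = ⁅g x, dlt f g y⁆ * ⁅g x, dlt f g y'⁆
      rw [dlt_mul f g hC, comm_mul_right hC, comm_conj_right hC])

noncomputable def innerAb (x : A) : Abelianization A →* ↥(Subgroup.center C) :=
  Abelianization.lift (mapInner hC f g x)

lemma innerAb_of (x y : A) :
    innerAb hC f g x (Abelianization.of y) = ⟨⁅g x, dlt f g y⁆, comm_mem_center hC _ _⟩ :=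
  Abelianization.lift_apply_of _ _

/-- outer map : multiplicative in x, kills commutators in x -/
noncomputable def outerPsi : A →* (Abelianization A →* ↥(Subgroup.center C)) :=
  MonoidHom.mk' (fun x => innerAb hC f g x)
    (fun x x' => by
      apply Abelianization.hom_ext
      ext y
      simp only [MonoidHom.comp_apply, MonoidHom.mul_apply, innerAb_of, MulMemClass.mk_mul_mk]
      rw [map_mul, comm_mul_left hC])

noncomputable def outerPsiAb : Abelianization A →* (Abelianization A →* ↥(Subgroup.center C)) :=
  Abelianization.lift (outerPsi hC f g)

/-- the bilinear pairing on the tensor square -/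
noncomputable def B2add : AbG A →+ (AbG A →+ Additive ↥(Subgroup.center C)) :=
  AddMonoidHom.mk'
    (fun u => AddMonoidHom.mk'
      (fun v => Additive.ofMul (outerPsiAb hC f g u.toMul v.toMul))
      (fun v v' => by
        show Additive.ofMul (outerPsiAb hC f g u.toMul (v.toMul * v'.toMul)) = _
        rw [map_mul]; rfl))
    (fun u u' => by
      apply AddMonoidHom.ext
      intro v
      show Additive.ofMul (outerPsiAb hC f g (u.toMul * u'.toMul) v.toMul) = _
      rw [map_mul, MonoidHom.mul_apply]; rfl)

noncomputable def B2lin : AbG A →ₗ[ℤ] (AbG A →ₗ[ℤ] Additive ↥(Subgroup.center C)) :=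
  AddMonoidHom.toIntLinearMap
    { toFun := fun u => (B2add hC f g u).toIntLinearMap
      map_zero' := by
        apply LinearMap.ext; intro v
        show (B2add hC f g 0) v = 0
        rw [map_zero]; rfl
      map_add' := fun u u' => by
        apply LinearMap.ext; intro v
        show (B2add hC f g (u + u')) v = (B2add hC f g u) v + (B2add hC f g u') v
        rw [map_add]; rfl }

noncomputable def B2 : TT A →ₗ[ℤ] Additive ↥(Subgroup.center C) :=
  TensorProduct.lift (B2lin hC f g)

lemma B2_tmul (x y : A) :
    B2 hC f g ((abm A x) ⊗ₜ[ℤ] (abm A y)) =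
      Additive.ofMul ⟨⁅g x, dlt f g y⁆, comm_mem_center hC _ _⟩ := by
  erw [B2, TensorProduct.lift.tmul]

lemma B2_tmul_vanish {x y : A} (h : f y = g y) :
    B2 hC f g ((abm A x) ⊗ₜ[ℤ] (abm A y)) = 0 := by
  rw [B2_tmul]
  have : ⁅g x, dlt f g y⁆ = 1 := by rw [dlt_eq_one f g h, commutatorElement_one_right]
  simp only [this]
  rfl

/-- image under `f` versus `g` of a product of commutators with left entries
on which `f` and `g` agree -/
lemma fg_prodC (L : List (A × A)) (hL : ∀ e ∈ L, f e.1 = g e.1) :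
    f (prodC L) * (g (prodC L))⁻¹ = ((B2 hC f g (tsumL L)).toMul : C) := by
  induction L with
  | nil => simp [prodC, tsumL]
  | cons e L ih =>
    have hLe : ∀ e' ∈ L, f e'.1 = g e'.1 := fun e' he' => hL e' (List.mem_cons_of_mem _ he')
    have ihe := ih hLe
    have hsingle : f ⁅e.1, e.2⁆ * (g ⁅e.1, e.2⁆)⁻¹ = ⁅g e.1, dlt f g e.2⁆ := by
      rw [map_commutatorElement, map_commutatorElement, hL e (List.mem_cons_self)]
      rw [show f e.2 = dlt f g e.2 * g e.2 from (dlt_mul_g f g e.2).symm]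
      rw [comm_mul_right hC]
      group
    have hcen1 : g ⁅e.1, e.2⁆ ∈ Subgroup.center C := by
      rw [map_commutatorElement]; exact comm_mem_center hC _ _
    have hcen2 : f (prodC L) * (g (prodC L))⁻¹ ∈ Subgroup.center C := by
      rw [ihe]; exact ((B2 hC f g (tsumL L)).toMul : ↥(Subgroup.center C)).2
    calc f (prodC (e :: L)) * (g (prodC (e :: L)))⁻¹
        = f ⁅e.1, e.2⁆ * (f (prodC L) * (g (prodC L))⁻¹) * (g ⁅e.1, e.2⁆)⁻¹ := by
          rw [prodC_cons, map_mul, map_mul]; group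
      _ = f ⁅e.1, e.2⁆ * ((f (prodC L) * (g (prodC L))⁻¹) * (g ⁅e.1, e.2⁆)⁻¹) := by group
      _ = f ⁅e.1, e.2⁆ * ((g ⁅e.1, e.2⁆)⁻¹ * (f (prodC L) * (g (prodC L))⁻¹)) := by
          rw [← central_comm hcen2 ((g ⁅e.1, e.2⁆)⁻¹)]
      _ = f ⁅e.1, e.2⁆ * (g ⁅e.1, e.2⁆)⁻¹ * (f (prodC L) * (g (prodC L))⁻¹) := by group
      _ = ⁅g e.1, dlt f g e.2⁆ * ((B2 hC f g (tsumL L)).toMul : C) := by rw [hsingle, ihe]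
      _ = ((B2 hC f g (tsumL (e :: L))).toMul : C) := by
          rw [tsumL_cons, map_add, B2_tmul]
          rfl

lemma B2_tsumR_vanish (L : List (A × A)) (hL : ∀ e ∈ L, f e.1 = g e.1) :
    B2 hC f g (tsumR L) = 0 := by
  induction L with
  | nil => simp
  | cons e L ih =>
    rw [tsumR_cons, map_add, ih (fun e' he' => hL e' (List.mem_cons_of_mem _ he')),
      B2_tmul_vanish hC f g (hL e (List.mem_cons_self)), add_zero]

lemma B2_wsum_vanish (Lw : List (ℤ × A × A)) (hL : ∀ e ∈ Lw, f e.2.2 = g e.2.2) :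
    B2 hC f g (wsum Lw) = 0 := by
  induction Lw with
  | nil => simp
  | cons e L ih =>
    rw [wsum_cons, map_add, ih (fun e' he' => hL e' (List.mem_cons_of_mem _ he')),
      map_smul, B2_tmul_vanish hC f g (hL e (List.mem_cons_self)), smul_zero, add_zero]

/-- sufficiency criterion for dominion membership -/
lemma dominion_sufficiency (hA : IsNil2 A) (B' : Subgroup A) {c : A}
    (L₁ L₂ : List (A × A)) (Lw : List (ℤ × A × A))
    (h1 : ∀ e ∈ L₁, e.1 ∈ B') (h2 : ∀ e ∈ L₂, e.1 ∈ B') (hw : ∀ e ∈ Lw, e.2.2 ∈ B')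
    (hc : c⁻¹ = prodC L₁) (ht : tsumL L₁ = tsumR L₂ + wsum Lw) :
    c ∈ Dominion B' := by
  intro C _ hC f g hfg
  have key : f c⁻¹ * (g c⁻¹)⁻¹ = 1 := by
    rw [hc, fg_prodC hC f g L₁ (fun e he => hfg e.1 (h1 e he)), ht, map_add,
      B2_tsumR_vanish hC f g L₂ (fun e he => hfg e.1 (h2 e he)),
      B2_wsum_vanish hC f g Lw (fun e he => hfg e.2.2 (hw e he)), add_zero]
    rfl
  have h1' : f c⁻¹ = g c⁻¹ := by rwa [mul_inv_eq_one] at key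
  rw [map_inv, map_inv] at h1'
  exact inv_injective h1'

end Sufficiency
section Backward

variable {G : Type u} [Group G]

lemma prodC_eq_one_of_fst_one {A : Type u} [Group A] (L : List (A × A))
    (h : ∀ e ∈ L, e.1 = 1) : prodC L = 1 := by
  induction L with
  | nil => simp
  | cons e L ih =>
    rw [prodC_cons, h e (List.mem_cons_self), commutatorElement_one_left, one_mul]
    exact ih fun e' he' => h e' (List.mem_cons_of_mem _ he')

lemma backward_direction (hG : IsNil2 G) (htor : ∀ g : G, IsOfFinOrder g)
    (hparts : ∀ (p : ℕ), p.Prime → ∀ H : Subgroup G,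
        (H : Set G) = {g : G | ∃ k : ℕ, orderOf g = p ^ k} → IsAbsolutelyClosed ↥H) :
    IsAbsolutelyClosed G := by
  intro A _ hA ι hι
  apply Set.Subset.antisymm _ (range_subset_dominion _)
  intro a ha
  obtain ⟨b, L₁, L₂, Lw, hb, h1, h2, hw, hay, hinv, ht⟩ := dominion_necessity hA ι.range ha
  set c := prodC L₂ with hcdef
  suffices hcr : c ∈ ι.range by
    rw [hay]; exact Subgroup.mul_mem _ (Subgroup.inv_mem _ hb) hcr
  -- order of elements of the range are finite
  have hord_ne : ∀ x : A, x ∈ ι.range → orderOf x ≠ 0 := by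
    rintro x ⟨γ, rfl⟩
    rw [orderOf_injective ι hι γ]
    exact (orderOf_pos_iff.2 (htor γ)).ne'
  -- the master exponent N
  set ords : List ℕ := (L₁.map fun e => orderOf e.1) ++ (L₂.map fun e => orderOf e.1)
    ++ (Lw.map fun e => orderOf e.2.2) with hordsdef
  set N : ℕ := ords.prod with hNdef
  have hords_ne : ∀ x ∈ ords, 0 < x := by
    intro x hx
    rw [hordsdef] at hx
    rcases List.mem_append.1 hx with hx | hx
    · rcases List.mem_append.1 hx with hx | hx <;>
      · rw [List.mem_map] at hx
        obtain ⟨e, he, rfl⟩ := hx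
        first
          | exact Nat.pos_of_ne_zero (hord_ne _ (h1 e he))
          | exact Nat.pos_of_ne_zero (hord_ne _ (h2 e he))
    · rw [List.mem_map] at hx
      obtain ⟨e, he, rfl⟩ := hx
      exact Nat.pos_of_ne_zero (hord_ne _ (hw e he).2)
  have hN0 : N ≠ 0 := (List.prod_pos hords_ne).ne'
  have hd1 : ∀ e ∈ L₁, orderOf e.1 ∣ N :=
    fun e he => List.dvd_prod (by
      rw [hordsdef]
      exact List.mem_append.2 (Or.inl (List.mem_append.2 (Or.inl
        (List.mem_map.2 ⟨e, he, rfl⟩)))))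
  have hd2 : ∀ e ∈ L₂, orderOf e.1 ∣ N :=
    fun e he => List.dvd_prod (by
      rw [hordsdef]
      exact List.mem_append.2 (Or.inl (List.mem_append.2 (Or.inr
        (List.mem_map.2 ⟨e, he, rfl⟩)))))
  have hdw : ∀ e ∈ Lw, orderOf e.2.2 ∣ N :=
    fun e he => List.dvd_prod (by
      rw [hordsdef]
      exact List.mem_append.2 (Or.inr (List.mem_map.2 ⟨e, he, rfl⟩)))
  -- c ^ N = 1
  have hcN : c ^ N = 1 := by
    rw [hcdef, ← prodC_powmap hA]
    apply prodC_eq_one_of_fst_one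
    intro e he
    rw [List.mem_map] at he
    obtain ⟨e', he', rfl⟩ := he
    exact orderOf_dvd_iff_pow_eq_one.1 (hd2 e' he')
  -- the subgroup of good exponents
  set I : AddSubgroup ℤ :=
    { carrier := {z : ℤ | c ^ z ∈ ι.range}
      zero_mem' := by simp only [Set.mem_setOf_eq, zpow_zero]; exact Subgroup.one_mem _
      add_mem' := by
        intro x y hx hy
        simp only [Set.mem_setOf_eq, zpow_add]
        exact Subgroup.mul_mem _ hx hy
      neg_mem' := by
        intro x hx
        simp only [Set.mem_setOf_eq, zpow_neg]
        exact Subgroup.inv_mem _ hx } with hIdef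
  have hNI : (N : ℤ) ∈ I := by
    show c ^ (N : ℤ) ∈ ι.range
    rw [zpow_natCast, hcN]
    exact Subgroup.one_mem _
  -- key per-prime fact
  have keyPrime : ∀ q : ℕ, q.Prime → q ∣ N → ∃ n : ℕ, c ^ (n : ℤ) ∈ ι.range ∧ ¬ q ∣ n := by
    intro q hq hqN
    set e := N.factorization q with hedef
    set m := N / q ^ e with hmdef
    have hme : q ^ e * m = N := Nat.ordProj_mul_ordCompl_eq_self N q
    have hqm : ¬ q ∣ m := Nat.not_dvd_ordCompl hq hN0
    have hepos : 0 < e := hq.factorization_pos_of_dvd hN0 hqN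
    have hqe1 : 1 < q ^ e := Nat.one_lt_pow hepos.ne' hq.one_lt
    have hcop : Nat.Coprime m (q ^ e) :=
      Nat.Coprime.pow_right e ((hq.coprime_iff_not_dvd.2 hqm).symm)
    obtain ⟨s, hs⟩ := Nat.exists_mul_mod_eq_one_of_coprime hcop hqe1
    refine ⟨m * s, ?_, ?_⟩
    · -- c ^ (m * s) lies in the p-part dominion hence in the range
      set n := m * s with hndef
      set Hp := pPart G q with hHpdef
      set B' : Subgroup A := (ι.comp Hp.subtype).range with hB'def
      have hB'le : B' ≤ ι.range := by
        rintro x ⟨γ, rfl⟩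
        exact ⟨Hp.subtype γ, rfl⟩
      have hpowmem : ∀ x : A, x ∈ ι.range → orderOf x ∣ N → x ^ n ∈ B' := by
        rintro x ⟨γ, rfl⟩ hdvd
        rw [orderOf_injective ι hι γ] at hdvd
        have hpow : (γ ^ n) ^ (q ^ e) = 1 := by
          rw [← pow_mul, hndef]
          have : m * s * q ^ e = N * s := by rw [← hme]; ring
          rw [this, pow_mul]
          rw [orderOf_dvd_iff_pow_eq_one.1 hdvd, one_pow]
        have hmemp : γ ^ n ∈ Hp := by
          rw [hHpdef, ← SetLike.mem_coe, pPart_carrier hG hq]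
          obtain ⟨k, _, hk⟩ := (Nat.dvd_prime_pow hq).1 (orderOf_dvd_of_pow_eq_one hpow)
          exact ⟨k, hk⟩
        exact ⟨⟨γ ^ n, hmemp⟩, by simp⟩
      -- apply the absolute closedness of the q-part
      have hHpclosed : IsAbsolutelyClosed ↥Hp :=
        hparts q hq Hp (pPart_carrier hG hq)
      have hB'inj : Function.Injective (ι.comp Hp.subtype) :=
        hι.comp (Subgroup.subtype_injective Hp)
      have hdomeq := hHpclosed A hA (ι.comp Hp.subtype) hB'inj
      have hmem : c ^ n ∈ Dominion B' := by
        apply dominion_sufficiency hA B' (L₁.map fun e => (e.1 ^ n, e.2))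
          (L₂.map fun e => (e.1 ^ n, e.2)) (Lw.map fun e => (e.1, e.2.1, e.2.2 ^ n))
        · intro e' he'
          rw [List.mem_map] at he'
          obtain ⟨e0, he0, rfl⟩ := he'
          exact hpowmem e0.1 (h1 e0 he0) (hd1 e0 he0)
        · intro e' he'
          rw [List.mem_map] at he'
          obtain ⟨e0, he0, rfl⟩ := he'
          exact hpowmem e0.1 (h2 e0 he0) (hd2 e0 he0)
        · intro e' he'
          rw [List.mem_map] at he'
          obtain ⟨e0, he0, rfl⟩ := he'
          exact hpowmem e0.2.2 (hw e0 he0).2 (hdw e0 he0)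
        · rw [← inv_pow, hinv, ← prodC_powmap hA]
        · rw [tsumL_powmap, tsumR_powmap, wsum_powmap, ht, smul_add]
      rw [hdomeq] at hmem
      rw [zpow_natCast]
      exact hB'le hmem
    · -- q does not divide m * s
      intro hdvd
      have hms1 : m * s % q ^ e = 1 := hs.2
      have hms_pos : 1 ≤ m * s := by
        rcases Nat.eq_zero_or_pos (m * s) with h0 | h0
        · rw [h0] at hms1; simp at hms1
        · exact h0
      have hdvd' : q ^ e ∣ m * s - 1 := by
        have : 1 % q ^ e = 1 := Nat.mod_eq_of_lt hqe1
        have hmod : 1 ≡ m * s [MOD q ^ e] := by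
          rw [Nat.ModEq, this, hms1]
        exact (Nat.modEq_iff_dvd' hms_pos).1 hmod
      have hq1 : q ∣ m * s - 1 := (dvd_pow_self q hepos.ne').trans hdvd'
      have : q ∣ 1 := by
        have := Nat.dvd_sub hdvd hq1
        rwa [Nat.sub_sub_self hms_pos] at this
      exact hq.one_lt.ne' (Nat.eq_one_of_dvd_one this)
  -- assemble : the subgroup I contains 1
  obtain ⟨d, hd⟩ := Int.subgroup_cyclic I
  have hdN : d ∣ (N : ℤ) := by
    have := hNI
    rw [hd, AddSubgroup.mem_closure_singleton] at this
    obtain ⟨k, hk⟩ := this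
    exact ⟨k, by rw [← hk, smul_eq_mul]; ring⟩
  have hd0 : d ≠ 0 := by
    rintro rfl
    rw [zero_dvd_iff] at hdN
    exact hN0 (by exact_mod_cast hdN)
  have habs1 : d.natAbs = 1 := by
    by_contra hne
    obtain ⟨q, hq, hqd⟩ := Nat.exists_prime_and_dvd hne
    have hqN : q ∣ N := by
      rw [← Int.natCast_dvd_natCast]
      exact (Int.natCast_dvd_natCast.2 hqd).trans (Int.natAbs_dvd.2 hdN)
    obtain ⟨n, hnI, hqn⟩ := keyPrime q hq hqN
    have hdn : d ∣ (n : ℤ) := by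
      have : (n : ℤ) ∈ I := hnI
      rw [hd, AddSubgroup.mem_closure_singleton] at this
      obtain ⟨k, hk⟩ := this
      exact ⟨k, by rw [← hk, smul_eq_mul]; ring⟩
    exact hqn (Int.natCast_dvd_natCast.1
      ((Int.natCast_dvd_natCast.2 hqd).trans (Int.natAbs_dvd.2 hdn)))
  have h1I : (1 : ℤ) ∈ I := by
    rw [hd, AddSubgroup.mem_closure_singleton]
    rcases Int.natAbs_eq_iff.1 habs1 with h | h
    · exact ⟨1, by rw [h, smul_eq_mul]; ring⟩
    · exact ⟨-1, by rw [h, smul_eq_mul]; ring⟩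
  have : c ^ (1 : ℤ) ∈ ι.range := h1I
  rwa [zpow_one] at this

end Backward

/-- A torsion nil-2 group is absolutely closed in `N₂` iff each of its `p`-parts is. -/
theorem torsion_absolutelyClosed_iff_p_parts {G : Type u} [Group G] (hG : IsNil2 G)
    (htor : ∀ g : G, IsOfFinOrder g) :
    IsAbsolutelyClosed G ↔
      ∀ (p : ℕ), p.Prime → ∀ H : Subgroup G,
        (H : Set G) = {g : G | ∃ k : ℕ, orderOf g = p ^ k} →
        IsAbsolutelyClosed H := by
  constructor
  · intro hac p hp H hH
    exact forward_direction hG htor hac hp H hH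
  · intro hparts
    exact backward_direction hG htor hparts
end

section
/- For every prime p and every integer a ≥ 1, the abelian group ℤ × ℤ/p^aℤ is not absolutely closed in N₂. -/
universe u

open scoped commutatorElement

/- ### Auxiliary nil-2 commutator identities -/

section Nil2Lemmas

variable {C : Type*} [Group C] (hC : IsNil2 C)
include hC

lemma nil2_comm_central (x y : C) : ⁅x, y⁆ ∈ Subgroup.center C :=
  hC (commutator_def C ▸
    Subgroup.commutator_mem_commutator (Subgroup.mem_top _) (Subgroup.mem_top _))

lemma nil2_mul_eq (x y : C) : x * y = ⁅x, y⁆ * (y * x) := by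
  rw [commutatorElement_def]; group

lemma nil2_mul_pow (x y : C) (n : ℕ) : x * y ^ n = ⁅x, y⁆ ^ n * (y ^ n * x) := by
  induction n with
  | zero => simp
  | succ n ih =>
    have hc : ∀ z : C, z * ⁅x, y⁆ = ⁅x, y⁆ * z := fun z =>
      Subgroup.mem_center_iff.mp (nil2_comm_central hC x y) z
    calc x * y ^ (n+1) = (x * y ^ n) * y := by rw [pow_succ, mul_assoc]
    _ = ⁅x, y⁆ ^ n * (y ^ n * (x * y)) := by rw [ih]; group
    _ = ⁅x, y⁆ ^ n * (y ^ n * (⁅x, y⁆ * (y * x))) := by rw [← nil2_mul_eq hC]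
    _ = ⁅x, y⁆ ^ n * ((y ^ n * ⁅x, y⁆) * (y * x)) := by group
    _ = ⁅x, y⁆ ^ n * ((⁅x, y⁆ * y ^ n) * (y * x)) := by rw [hc]
    _ = ⁅x, y⁆ ^ (n+1) * (y ^ (n+1) * x) := by rw [pow_succ, pow_succ']; group

lemma nil2_comm_pow_right (x y : C) (n : ℕ) : ⁅x, y ^ n⁆ = ⁅x, y⁆ ^ n := by
  have h := nil2_mul_pow hC x y n
  rw [commutatorElement_def, h]
  group

lemma nil2_comm_pow_left (x y : C) (n : ℕ) : ⁅x ^ n, y⁆ = ⁅x, y⁆ ^ n := by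
  have h1 : ⁅x ^ n, y⁆ = ⁅y, x ^ n⁆⁻¹ := by rw [commutatorElement_inv]
  rw [h1, nil2_comm_pow_right hC y x n, ← inv_pow, commutatorElement_inv]

lemma nil2_comm_pow_swap (x y : C) (n : ℕ) : ⁅x, y ^ n⁆ = ⁅x ^ n, y⁆ := by
  rw [nil2_comm_pow_right hC, nil2_comm_pow_left hC]

end Nil2Lemmas

/- ### The witness group `Wit p b`: a central extension
`ℤ/p² ↪ Wit → ℤ × ℤ/p^(b+2)` with Heisenberg-type cocycle. -/

@[ext]
structure Wit (p b : ℕ) : Type where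
  x : ℤ
  y : ZMod (p ^ (b + 2))
  z : ZMod (p ^ 2)

namespace Wit

variable {p b : ℕ}

/-- The reduction `ℤ/p^(b+2) → ℤ/p²`. -/
def cst (p b : ℕ) : ZMod (p ^ (b + 2)) →+* ZMod (p ^ 2) :=
  ZMod.castHom (show p ^ 2 ∣ p ^ (b + 2) from pow_dvd_pow p (by omega)) (ZMod (p ^ 2))

instance : Group (Wit p b) where
  mul g h := ⟨g.x + h.x, g.y + h.y, g.z + h.z + cst p b g.y * (h.x : ZMod (p ^ 2))⟩
  one := ⟨0, 0, 0⟩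
  inv g := ⟨-g.x, -g.y, -g.z + cst p b g.y * (g.x : ZMod (p ^ 2))⟩
  mul_assoc g h k := by
    refine Wit.ext ?_ ?_ ?_
    · show g.x + h.x + k.x = g.x + (h.x + k.x); ring
    · show g.y + h.y + k.y = g.y + (h.y + k.y); ring
    · show g.z + h.z + cst p b g.y * (h.x : ZMod (p ^ 2)) + k.z
          + cst p b (g.y + h.y) * (k.x : ZMod (p ^ 2))
        = g.z + (h.z + k.z + cst p b h.y * (k.x : ZMod (p ^ 2)))
          + cst p b g.y * ((h.x + k.x : ℤ) : ZMod (p ^ 2))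
      rw [map_add]
      push_cast
      ring
  one_mul g := by
    refine Wit.ext ?_ ?_ ?_
    · show (0 : ℤ) + g.x = g.x; ring
    · show 0 + g.y = g.y; ring
    · show 0 + g.z + cst p b 0 * (g.x : ZMod (p ^ 2)) = g.z
      rw [map_zero]; ring
  mul_one g := by
    refine Wit.ext ?_ ?_ ?_
    · show g.x + (0 : ℤ) = g.x; ring
    · show g.y + 0 = g.y; ring
    · show g.z + 0 + cst p b g.y * ((0 : ℤ) : ZMod (p ^ 2)) = g.z
      push_cast; ring
  inv_mul_cancel g := by
    refine Wit.ext ?_ ?_ ?_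
    · show -g.x + g.x = 0; ring
    · show -g.y + g.y = 0; ring
    · show -g.z + cst p b g.y * (g.x : ZMod (p ^ 2)) + g.z
          + cst p b (-g.y) * (g.x : ZMod (p ^ 2)) = 0
      rw [map_neg]; ring

@[simp] lemma mul_x (g h : Wit p b) : (g * h).x = g.x + h.x := rfl
@[simp] lemma mul_y (g h : Wit p b) : (g * h).y = g.y + h.y := rfl
@[simp] lemma mul_z (g h : Wit p b) :
    (g * h).z = g.z + h.z + cst p b g.y * (h.x : ZMod (p ^ 2)) := rfl
@[simp] lemma one_x : (1 : Wit p b).x = 0 := rfl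
@[simp] lemma one_y : (1 : Wit p b).y = 0 := rfl
@[simp] lemma one_z : (1 : Wit p b).z = 0 := rfl
@[simp] lemma inv_x (g : Wit p b) : (g⁻¹).x = -g.x := rfl
@[simp] lemma inv_y (g : Wit p b) : (g⁻¹).y = -g.y := rfl
@[simp] lemma inv_z (g : Wit p b) :
    (g⁻¹).z = -g.z + cst p b g.y * (g.x : ZMod (p ^ 2)) := rfl

lemma central_of (g : Wit p b) (h1 : g.x = 0) (h2 : g.y = 0) :
    g ∈ Subgroup.center (Wit p b) := by
  rw [Subgroup.mem_center_iff]
  intro k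
  ext <;> simp [h1, h2] <;> ring

lemma isNil2 : IsNil2 (Wit p b) := by
  rw [IsNil2, commutator_def, Subgroup.commutator_le]
  intro g _ h _
  apply central_of <;> simp [commutatorElement_def] <;> ring

/-- generator `t` -/
def t : Wit p b := ⟨1, 0, 0⟩
/-- generator `s` -/
def s : Wit p b := ⟨0, 1, 0⟩

lemma t_pow (n : ℕ) : (t : Wit p b) ^ n = ⟨n, 0, 0⟩ := by
  induction n with
  | zero => ext <;> simp
  | succ n ih =>
    rw [pow_succ, ih]
    ext <;> simp [t] <;> push_cast <;> ring

lemma s_pow (n : ℕ) : (s : Wit p b) ^ n = ⟨0, n, 0⟩ := by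
  induction n with
  | zero => ext <;> simp
  | succ n ih =>
    rw [pow_succ, ih]
    ext <;> simp [s] <;> push_cast <;> ring

/-- The witness element `⁅t, s^p⁆`. -/
lemma comm_t_sp : ⁅(t : Wit p b), (s : Wit p b) ^ p⁆ = ⟨0, 0, -((p : ℕ) : ZMod (p ^ 2))⟩ := by
  rw [commutatorElement_def, s_pow]
  ext <;> simp [t, map_natCast] <;> push_cast <;> ring

end Wit

/- ### The embedding of `ℤ × ℤ/p^(b+1)` into `Wit p b`. -/

section Emb

variable (p b : ℕ)

/-- multiplication-by-`p` map `ℤ/p^(b+1) → ℤ/p^(b+2)`. -/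
def psi (n : ZMod (p ^ (b + 1))) : ZMod (p ^ (b + 2)) :=
  ((p * n.val : ℕ) : ZMod (p ^ (b + 2)))

variable (hp : 2 ≤ p)
include hp

lemma psi_val (n : ZMod (p ^ (b + 1))) : (psi p b n).val = p * n.val := by
  haveI : NeZero (p ^ (b + 1)) := ⟨pow_ne_zero _ (by omega)⟩
  apply ZMod.val_cast_of_lt
  calc p * n.val < p * p ^ (b + 1) :=
    mul_lt_mul_of_pos_left (ZMod.val_lt n) (by omega)
  _ = p ^ (b + 2) := by ring

lemma psi_injective : Function.Injective (psi p b) := by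
  intro m n h
  haveI : NeZero (p ^ (b + 1)) := ⟨pow_ne_zero _ (by omega)⟩
  have hv : (psi p b m).val = (psi p b n).val := by rw [h]
  rw [psi_val p b hp, psi_val p b hp] at hv
  have hmn : m.val = n.val := Nat.eq_of_mul_eq_mul_left (by omega) hv
  have h1 := ZMod.natCast_rightInverse (n := p ^ (b + 1)) m
  have h2 := ZMod.natCast_rightInverse (n := p ^ (b + 1)) n
  rw [← h1, ← h2, hmn]

lemma psi_add (m n : ZMod (p ^ (b + 1))) :
    psi p b (m + n) = psi p b m + psi p b n := by
  haveI : NeZero (p ^ (b + 1)) := ⟨pow_ne_zero _ (by omega)⟩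
  unfold psi
  rw [ZMod.val_add]
  set k := m.val + n.val with hk
  set q := p ^ (b + 1) with hqdef
  have hq : ((p * q : ℕ) : ZMod (p ^ (b + 2))) = 0 := by
    have h' : p * q = p ^ (b + 2) := by rw [hqdef]; ring
    rw [h', ZMod.natCast_self]
  have hnat : p * k = (p * q) * (k / q) + p * (k % q) := by
    conv_lhs => rw [← Nat.div_add_mod k q]
    ring
  have h1 : ((p * k : ℕ) : ZMod (p ^ (b + 2)))
      = ((p * (k % q) : ℕ) : ZMod (p ^ (b + 2))) := by
    calc ((p * k : ℕ) : ZMod (p ^ (b + 2)))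
        = ((p * q : ℕ) : ZMod (p ^ (b + 2))) * ((k / q : ℕ) : ZMod (p ^ (b + 2)))
          + ((p * (k % q) : ℕ) : ZMod (p ^ (b + 2))) := by
          rw [hnat]; push_cast; ring
    _ = ((p * (k % q) : ℕ) : ZMod (p ^ (b + 2))) := by rw [hq]; ring
  rw [← h1, hk]
  push_cast
  ring

lemma psi_zero : psi p b 0 = 0 := by
  unfold psi
  simp

lemma psi_one : psi p b 1 = ((p : ℕ) : ZMod (p ^ (b + 2))) := by
  haveI : Fact (1 < p ^ (b + 1)) := ⟨Nat.one_lt_pow (by omega) (by omega)⟩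
  unfold psi
  rw [ZMod.val_one]
  norm_num

/-- The embedding `ℤ × ℤ/p^(b+1) →* Wit p b`. -/
def emb : Multiplicative ℤ × Multiplicative (ZMod (p ^ (b + 1))) →* Wit p b where
  toFun g := ⟨p * g.1.toAdd, psi p b g.2.toAdd, 0⟩
  map_one' := by
    ext <;> simp [psi_zero p b hp]
  map_mul' g h := by
    have hpsum := psi_add p b hp g.2.toAdd h.2.toAdd
    ext
    · simp; ring
    · simp [hpsum]
    · show (0 : ZMod (p ^ 2)) = 0 + 0 + Wit.cst p b (psi p b g.2.toAdd) * ((p * h.1.toAdd : ℤ) : ZMod (p ^ 2))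
      have hc : Wit.cst p b (psi p b g.2.toAdd) = (p : ZMod (p ^ 2)) * (g.2.toAdd.val : ZMod (p ^ 2)) := by
        unfold psi
        rw [map_natCast]
        push_cast
        ring
      have hpp : ((p : ℕ) : ZMod (p ^ 2)) * ((p : ℕ) : ZMod (p ^ 2)) = 0 := by
        rw [← Nat.cast_mul, ← pow_two, ZMod.natCast_self]
      rw [hc]
      push_cast
      push_cast at hpp
      rw [show ((p : ZMod (p^2)) * ((g.2.toAdd.val : ℕ) : ZMod (p^2))) * ((p : ZMod (p^2)) * ((h.1.toAdd : ℤ) : ZMod (p^2))) = ((p : ZMod (p^2)) * (p : ZMod (p^2))) * (((g.2.toAdd.val : ℕ) : ZMod (p^2)) * ((h.1.toAdd : ℤ) : ZMod (p^2))) from by ring, hpp]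
      ring

lemma emb_injective : Function.Injective (emb p b hp) := by
  intro g h hgh
  have hx : (p : ℤ) * Multiplicative.toAdd g.1 = (p : ℤ) * Multiplicative.toAdd h.1 :=
    congrArg Wit.x hgh
  have hy : psi p b (Multiplicative.toAdd g.2) = psi p b (Multiplicative.toAdd h.2) :=
    congrArg Wit.y hgh
  have hp0 : (p : ℤ) ≠ 0 := by
    have : 0 < p := by omega
    exact_mod_cast this.ne'
  refine Prod.ext ?_ ?_
  · exact Multiplicative.toAdd.injective (mul_left_cancel₀ hp0 hx)
  · exact Multiplicative.toAdd.injective (psi_injective p b hp hy)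

end Emb

/-- For every prime `p` and `a ≥ 1`, the group `ℤ × ℤ/pᵃℤ` is not absolutely closed
in `N₂`. -/
theorem int_prod_zmod_not_absolutelyClosed (p : ℕ) (hp : p.Prime)
    (a : ℕ) (ha : 1 ≤ a) :
    ¬ IsAbsolutelyClosed (Multiplicative ℤ × Multiplicative (ZMod (p ^ a))) := by
  obtain ⟨b, rfl⟩ : ∃ b, a = b + 1 := ⟨a - 1, by omega⟩
  have hp2 : 2 ≤ p := hp.two_le
  intro habs
  have heq := habs (Wit p b) Wit.isNil2 (emb p b hp2) (emb_injective p b hp2)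
  -- the witness element
  set w : Wit p b := ⁅(Wit.t : Wit p b), (Wit.s : Wit p b) ^ p⁆ with hw
  -- `t^p` and `s^p` are in the range
  have htp : (Wit.t : Wit p b) ^ p ∈ (emb p b hp2).range := by
    refine ⟨(Multiplicative.ofAdd (1 : ℤ), Multiplicative.ofAdd (0 : ZMod (p ^ (b+1)))), ?_⟩
    rw [Wit.t_pow]
    ext
    · simp [emb]
    · simp [emb, psi_zero p b hp2]
    · simp [emb]
  have hsp : (Wit.s : Wit p b) ^ p ∈ (emb p b hp2).range := by
    refine ⟨(Multiplicative.ofAdd (0 : ℤ), Multiplicative.ofAdd (1 : ZMod (p ^ (b+1)))), ?_⟩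
    rw [Wit.s_pow]
    ext
    · simp [emb]
    · simp [emb, psi_one p b hp2]
    · simp [emb]
  -- `w` is in the dominion
  have hdom : w ∈ Dominion (emb p b hp2).range := by
    intro C _ hC f g hfg
    rw [hw]
    have e1 : f ((Wit.s : Wit p b) ^ p) = (g Wit.s) ^ p := by rw [hfg _ hsp, map_pow]
    have e2 : (f (Wit.t : Wit p b)) ^ p = (g Wit.t) ^ p := by
      rw [← map_pow, hfg _ htp, map_pow]
    calc f ⁅(Wit.t : Wit p b), (Wit.s : Wit p b) ^ p⁆
        = ⁅f Wit.t, (g Wit.s) ^ p⁆ := by rw [map_commutatorElement, e1]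
    _ = ⁅(f Wit.t) ^ p, g Wit.s⁆ := nil2_comm_pow_swap hC _ _ p
    _ = ⁅(g Wit.t) ^ p, g Wit.s⁆ := by rw [e2]
    _ = ⁅g Wit.t, (g Wit.s) ^ p⁆ := (nil2_comm_pow_swap hC _ _ p).symm
    _ = g ⁅(Wit.t : Wit p b), (Wit.s : Wit p b) ^ p⁆ := by
        rw [map_commutatorElement, map_pow]
  rw [heq] at hdom
  -- but `w` is not in the range
  rw [SetLike.mem_coe, MonoidHom.mem_range] at hdom
  obtain ⟨g, hg⟩ := hdom
  have hz := congrArg Wit.z hg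
  have hwz : w.z = -((p : ℕ) : ZMod (p ^ 2)) := by rw [hw, Wit.comm_t_sp]
  have h0 : (emb p b hp2 g).z = 0 := rfl
  rw [h0, hwz] at hz
  have hpz : ((p : ℕ) : ZMod (p ^ 2)) = 0 := by
    rw [← neg_eq_zero]; exact hz.symm
  rw [ZMod.natCast_eq_zero_iff] at hpz
  have := Nat.le_of_dvd (by omega) hpz
  nlinarith [hp.two_le]
end
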